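/- arXiv:1505.01700 — 2 statements merged into one kernel-verified Lean document; each statement's English description precedes it below -/
import Mathlib

section
/- Let q = p^n with p prime and let f(x) be a polynomial over F_q. Then there exists a polynomial g(x) = Σ g_i x^i over F_q of degree at most deg(f) such that g_i = 0 whenever p divides i (with i > 0), and Tr(f(α)) = Tr(g(α)) for all α in F_q. -/
open Polynomial Finset

private lemma trace_shift (p n : ℕ) (F : Type*) [Field F] [Fintype F]
    (hcard : Fintype.card F = p ^ n) (β : F) :
    ∑ i ∈ Finset.range n, (β ^ p) ^ p ^ i = ∑ i ∈ Finset.range n, β ^ p ^ i := by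
  have hβ : β ^ p ^ n = β := by rw [← hcard, FiniteField.pow_card]
  have h1 := Finset.sum_range_succ' (fun i => β ^ p ^ i) n
  have h2 := Finset.sum_range_succ (fun i => β ^ p ^ i) n
  have hterm : ∀ i, (β ^ p) ^ p ^ i = β ^ p ^ (i + 1) := by
    intro i; rw [← pow_mul, pow_succ']
  simp only [pow_zero, pow_one] at h1
  rw [h2, hβ] at h1
  have := add_right_cancel h1
  calc ∑ i ∈ Finset.range n, (β ^ p) ^ p ^ i
      = ∑ i ∈ Finset.range n, β ^ p ^ (i + 1) := by
        exact Finset.sum_congr rfl fun i _ => hterm i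
    _ = ∑ i ∈ Finset.range n, β ^ p ^ i := this.symm

private lemma aux_mono (p n : ℕ) (hp : p.Prime) (hn : 1 ≤ n) (F : Type*) [Field F]
    [Fintype F] [CharP F p] (hcard : Fintype.card F = p ^ n) (k : ℕ) :
    ∀ c : F, ∃ g : Polynomial F, g.degree ≤ (k : WithBot ℕ) ∧
      (∀ i : ℕ, 0 < i → p ∣ i → g.coeff i = 0) ∧
      ∀ α : F, ∑ i ∈ Finset.range n, (c * α ^ k) ^ p ^ i
             = ∑ i ∈ Finset.range n, (g.eval α) ^ p ^ i := by
  induction k using Nat.strong_induction_on with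
  | _ k ih =>
    intro c
    by_cases hk : 0 < k ∧ p ∣ k
    · obtain ⟨hk0, m, rfl⟩ := hk
      have hm0 : 0 < m := Nat.pos_of_ne_zero (by rintro rfl; simp at hk0)
      have hm : m < p * m := by
        have h := (Nat.mul_lt_mul_right hm0).mpr hp.one_lt
        rwa [one_mul] at h
      obtain ⟨g, hdeg, hcoeff, htr⟩ := ih m hm (c ^ p ^ (n - 1))
      refine ⟨g, hdeg.trans ?_, hcoeff, fun α => ?_⟩
      · exact_mod_cast Nat.cast_le.mpr hm.le
      · rw [← htr α]
        have hβ : (c ^ p ^ (n - 1) * α ^ m) ^ p = c * α ^ (p * m) := by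
          rw [mul_pow, ← pow_mul, ← pow_mul, ← pow_succ, Nat.sub_add_cancel hn,
            ← hcard, FiniteField.pow_card, mul_comm m p]
        rw [← trace_shift p n F hcard (c ^ p ^ (n - 1) * α ^ m), hβ]
    · refine ⟨Polynomial.C c * Polynomial.X ^ k, Polynomial.degree_C_mul_X_pow_le k c,
        fun i hi hpi => ?_, fun α => by simp⟩
      rw [Polynomial.coeff_C_mul, Polynomial.coeff_X_pow]
      have : i ≠ k := by rintro rfl; exact hk ⟨hi, hpi⟩
      simp [this]

/-- For q = p^n and f ∈ F_q[x], there exists g of degree at most deg f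
with g_i = 0 whenever p ∣ i (i > 0), and Tr(f(α)) = Tr(g(α)) for all α ∈ F_q. -/
theorem stmt_1 (p n : ℕ) (hp : p.Prime) (hn : 1 ≤ n) (F : Type*) [Field F] [Fintype F]
    [CharP F p] (hcard : Fintype.card F = p ^ n) (f : Polynomial F) :
    ∃ g : Polynomial F, g.degree ≤ f.degree ∧
      (∀ i : ℕ, 0 < i → p ∣ i → g.coeff i = 0) ∧
      ∀ α : F, ∑ i ∈ Finset.range n, (f.eval α) ^ p ^ i
             = ∑ i ∈ Finset.range n, (g.eval α) ^ p ^ i := by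
  haveI : ExpChar F p := ExpChar.prime hp
  choose G hdeg hcoeff htr using fun k => aux_mono p n hp hn F hcard k (f.coeff k)
  refine ⟨∑ k ∈ f.support, G k, ?_, ?_, ?_⟩
  · refine (Polynomial.degree_sum_le _ _).trans (Finset.sup_le fun k hk => ?_)
    exact (hdeg k).trans (Polynomial.le_degree_of_ne_zero (Polynomial.mem_support_iff.mp hk))
  · intro i hi hpi
    rw [Polynomial.finset_sum_coeff]
    exact Finset.sum_eq_zero fun k _ => hcoeff k i hi hpi
  · intro α
    have hev : f.eval α = ∑ k ∈ f.support, f.coeff k * α ^ k := by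
      rw [Polynomial.eval_eq_sum, Polynomial.sum_def]
    rw [hev, Polynomial.eval_finset_sum]
    calc ∑ i ∈ Finset.range n, (∑ k ∈ f.support, f.coeff k * α ^ k) ^ p ^ i
        = ∑ i ∈ Finset.range n, ∑ k ∈ f.support, (f.coeff k * α ^ k) ^ p ^ i := by
          exact Finset.sum_congr rfl fun i _ => sum_pow_char_pow _ _ _ _
      _ = ∑ k ∈ f.support, ∑ i ∈ Finset.range n, (f.coeff k * α ^ k) ^ p ^ i :=
          Finset.sum_comm
      _ = ∑ k ∈ f.support, ∑ i ∈ Finset.range n, ((G k).eval α) ^ p ^ i :=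
          Finset.sum_congr rfl fun k _ => htr k α
      _ = ∑ i ∈ Finset.range n, ∑ k ∈ f.support, ((G k).eval α) ^ p ^ i :=
          Finset.sum_comm
      _ = ∑ i ∈ Finset.range n, (∑ k ∈ f.support, (G k).eval α) ^ p ^ i := by
          exact Finset.sum_congr rfl fun i _ => (sum_pow_char_pow _ _ _ _).symm
end

section
/- Let p be a prime, and let Φ(T) = Ψ(T)·Θ(T) be a factorization of monic integer polynomials, where Φ(T) = Σ_{i=0}^{2g} c_{2g−i}T^i has degree 2g, Ψ(T) = Σ_{i=0}^{2r} a_{2r−i}T^i has degree 2r, and Θ has degree 2s with r + s = g. Suppose p divides c_j for all 1 ≤ j ≤ g (i.e., Φ has Hasse-Witt invariant 0, where c_0 = 1). Then p divides a_j for all 1 ≤ j ≤ r, i.e., Ψ also has Hasse-Witt invariant 0. -/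
/-- If Φ = Ψ·Θ is a factorization of monic integer q-Weil polynomials
(q = p^n), with deg Φ = 2g, deg Ψ = 2r, deg Θ = 2s, r + s = g, and Φ has Hasse–Witt
invariant 0 (p divides c_j = coeff of T^{2g−j} in Φ for all 1 ≤ j ≤ g), then Ψ also
has Hasse–Witt invariant 0 (p divides a_j = coeff of T^{2r−j} in Ψ for 1 ≤ j ≤ r). -/
theorem stmt_8 (p n : ℕ) (hp : p.Prime) (hn : 1 ≤ n) (q : ℕ) (hq : q = p ^ n)
    (g r s : ℕ) (hg : r + s = g) (Φ Ψ Θ : Polynomial ℤ)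
    (hfac : Φ = Ψ * Θ) (hmΦ : Φ.Monic) (hmΨ : Ψ.Monic) (hmΘ : Θ.Monic)
    (hdΦ : Φ.natDegree = 2 * g) (hdΨ : Ψ.natDegree = 2 * r) (hdΘ : Θ.natDegree = 2 * s)
    (hwΦ : ∀ i ≤ g, Φ.coeff i = (q : ℤ) ^ (g - i) * Φ.coeff (2 * g - i))
    (hwΨ : ∀ i ≤ r, Ψ.coeff i = (q : ℤ) ^ (r - i) * Ψ.coeff (2 * r - i))
    (hHW : ∀ j, 1 ≤ j → j ≤ g → (p : ℤ) ∣ Φ.coeff (2 * g - j)) :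
    ∀ j, 1 ≤ j → j ≤ r → (p : ℤ) ∣ Ψ.coeff (2 * r - j) := by
  haveI : Fact p.Prime := ⟨hp⟩
  set φ := Int.castRingHom (ZMod p) with hφ
  -- every non-leading coefficient of Φ is divisible by p
  have hΦdvd : ∀ i, i < 2 * g → (p : ℤ) ∣ Φ.coeff i := by
    intro i hi
    by_cases hig : i < g
    · rw [hwΦ i hig.le]
      have : (p : ℤ) ∣ (q : ℤ) ^ (g - i) := by
        refine dvd_pow ?_ (by omega)
        rw [hq]
        push_cast
        exact dvd_pow_self _ (by omega)
      exact this.mul_right _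
    · have h1 : 1 ≤ 2 * g - i := by omega
      have h2 : 2 * g - i ≤ g := by omega
      have := hHW (2 * g - i) h1 h2
      rwa [show 2 * g - (2 * g - i) = i by omega] at this
  -- Φ maps to X^(2g) mod p
  have hΦmap : Φ.map φ = Polynomial.X ^ (2 * g) := by
    ext i
    rw [Polynomial.coeff_map, Polynomial.coeff_X_pow]
    rcases lt_trichotomy i (2 * g) with h | h | h
    · rw [if_neg h.ne]
      have := hΦdvd i h
      simpa [hφ, ZMod.intCast_zmod_eq_zero_iff_dvd] using
        (ZMod.intCast_zmod_eq_zero_iff_dvd _ p).mpr this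
    · rw [if_pos h, h, ← hdΦ, hmΦ.coeff_natDegree]; simp
    · rw [if_neg h.ne']
      rw [Polynomial.coeff_eq_zero_of_natDegree_lt (by omega : Φ.natDegree < i)]
      simp
  have hmul : Ψ.map φ * Θ.map φ = Polynomial.X ^ (2 * g) := by
    rw [← Polynomial.map_mul, ← hfac, hΦmap]
  have hΨm : (Ψ.map φ).Monic := hmΨ.map φ
  have hΘm : (Θ.map φ).Monic := hmΘ.map φ
  have hΨne : Ψ.map φ ≠ 0 := hΨm.ne_zero
  have hΘne : Θ.map φ ≠ 0 := hΘm.ne_zero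
  have hdΨm : (Ψ.map φ).natDegree = 2 * r := by rw [hmΨ.natDegree_map, hdΨ]
  have hdΘm : (Θ.map φ).natDegree = 2 * s := by rw [hmΘ.natDegree_map, hdΘ]
  have htmul : (Ψ.map φ).natTrailingDegree + (Θ.map φ).natTrailingDegree = 2 * g := by
    rw [← Polynomial.natTrailingDegree_mul hΨne hΘne, hmul,
      Polynomial.natTrailingDegree_X_pow]
  have hle1 : (Ψ.map φ).natTrailingDegree ≤ 2 * r :=
    hdΨm ▸ Polynomial.natTrailingDegree_le_natDegree _
  have hle2 : (Θ.map φ).natTrailingDegree ≤ 2 * s :=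
    hdΘm ▸ Polynomial.natTrailingDegree_le_natDegree _
  have htΨ : (Ψ.map φ).natTrailingDegree = 2 * r := by omega
  intro j hj1 hjr
  have hzero : (Ψ.map φ).coeff (2 * r - j) = 0 :=
    Polynomial.coeff_eq_zero_of_lt_natTrailingDegree (by omega)
  rw [Polynomial.coeff_map] at hzero
  exact (ZMod.intCast_zmod_eq_zero_iff_dvd _ p).mp hzero
end
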